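/- Let γ, δ be (n-2)-strict partitions in a 2 × (2n-2) rectangle with |δ| = |γ| + p, γ → δ (Pieri relation for LG(2,2n)). A connected component of the set D of added boxes in columns n-1 through 2n-2 is bisected (i.e., some killed box of the component has non-killed boxes of the component in both earlier and later columns) if and only if all of the following hold: (i) |γ| ≤ 2n-3 and |δ| > 2n-3; (ii) γ ⊆ δ; (iii) γ_1 < n-1; (iv) δ_2 < γ_1. -/
import Mathlib


/-- The boxes of a two-row Young diagram with row lengths `g1, g2`
(box `(r,c)` in row `r ∈ {1,2}`, column `c ≥ 1`). -/
def bx (g1 g2 : ℕ) : Finset (ℕ × ℕ) :=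
  ((Finset.Icc 1 g1).image fun c => (1, c)) ∪ ((Finset.Icc 1 g2).image fun c => (2, c))

/-- Box `(r,c)` is related to `(r',c')` iff `|c-(n-1)| + r = |c'-(n-1)| + r'`
(the type B/C relatedness for `LG(2,2n)`). -/
abbrev rel (n : ℕ) (b b' : ℕ × ℕ) : Prop :=
  |(b.2 : ℤ) - ((n : ℤ) - 1)| + b.1 = |(b'.2 : ℤ) - ((n : ℤ) - 1)| + b'.1

/-- The Pieri relation `γ → δ` for `LG(2,2n)`: `δ` is obtained from `γ` by
removing a vertical strip from the first `n-2` columns (at most one box per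
row, removed boxes in columns `≤ n-2`) and adding a horizontal strip (at most
one box per column, i.e. `δ_2 ≤ γ_1`), such that (1) each `γ`-box in the first
`n-2` columns having no `δ`-box below it is related to at most one
`(δ∖γ)`-box, and (2) any `(γ∖δ)`-box and the box above it are each related to
exactly one `(δ∖γ)`-box, and all these `(δ∖γ)`-boxes lie in the same row. -/
def PieriRelC (n g1 g2 d1 d2 : ℕ) : Prop :=
  g1 ≤ d1 + 1 ∧ g2 ≤ d2 + 1 ∧
  (d1 < g1 → g1 ≤ n - 2) ∧ (d2 < g2 → g2 ≤ n - 2) ∧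
  d2 ≤ g1 ∧
  (∀ b ∈ bx g1 g2, b.2 ≤ n - 2 → (b.1 + 1, b.2) ∉ bx d1 d2 →
    ((bx d1 d2 \ bx g1 g2).filter (rel n b)).card ≤ 1) ∧
  (∀ b ∈ bx g1 g2 \ bx d1 d2,
    ((bx d1 d2 \ bx g1 g2).filter (rel n b)).card = 1 ∧
    (b.1 = 2 → ((bx d1 d2 \ bx g1 g2).filter (rel n (1, b.2))).card = 1)) ∧
  (∃ ρ, ∀ b ∈ bx g1 g2 \ bx d1 d2, ∀ a ∈ bx d1 d2 \ bx g1 g2,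
    (rel n b a ∨ (b.1 = 2 ∧ rel n (1, b.2) a)) → a.1 = ρ)


/-- The set `D` of `(δ∖γ)`-boxes in columns `n-1` through `2n-2`. -/
def Dset (n g1 g2 d1 d2 : ℕ) : Finset (ℕ × ℕ) :=
  (bx d1 d2 \ bx g1 g2).filter fun b => n - 1 ≤ b.2

/-- A `D`-box is killed iff it lies in one of the explicit column intervals
`S'_1 = [2n-2-γ_1, 2n-3-δ_2]`, `T'_1 = [2n-1-γ_2, 2n-2]` (row 1) or
`T'_2 = [2n-2-γ_2, 2n-3]` (row 2), the box in column `n-1` never being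
killed.  (Intervals are written additively to avoid truncated
subtraction.) -/
def killedC (n g1 g2 d2 : ℕ) (b : ℕ × ℕ) : Prop :=
  b.2 ≠ n - 1 ∧
    ((b.1 = 1 ∧ ((2 * n - 2 ≤ b.2 + g1 ∧ b.2 + d2 + 3 ≤ 2 * n) ∨
                 (2 * n - 1 ≤ b.2 + g2 ∧ b.2 ≤ 2 * n - 2))) ∨
     (b.1 = 2 ∧ 2 * n - 2 ≤ b.2 + g2 ∧ b.2 + 3 ≤ 2 * n))

/-- Two boxes are connected if they share at least a vertex. -/
def adj (x y : ℕ × ℕ) : Prop :=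
  x.1 ≤ y.1 + 1 ∧ y.1 ≤ x.1 + 1 ∧ x.2 ≤ y.2 + 1 ∧ y.2 ≤ x.2 + 1

/-- `a` and `b` lie in the same connected component of the finite box set
`D`. -/
def sameComp (D : Finset (ℕ × ℕ)) (a b : ℕ × ℕ) : Prop :=
  Relation.ReflTransGen (fun x y => x ∈ D ∧ y ∈ D ∧ adj x y) a b


lemma mem_bx {g1 g2 : ℕ} {b : ℕ × ℕ} :
    b ∈ bx g1 g2 ↔ ((b.1 = 1 ∧ 1 ≤ b.2 ∧ b.2 ≤ g1) ∨ (b.1 = 2 ∧ 1 ≤ b.2 ∧ b.2 ≤ g2)) := by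
  rcases b with ⟨r, c⟩
  simp only [bx, Finset.mem_union, Finset.mem_image, Finset.mem_Icc, Prod.mk.injEq]
  constructor
  · rintro (⟨a, ⟨h1, h2⟩, rfl, rfl⟩ | ⟨a, ⟨h1, h2⟩, rfl, rfl⟩) <;> simp_all
  · rintro (⟨rfl, h1, h2⟩ | ⟨rfl, h1, h2⟩)
    · exact Or.inl ⟨c, ⟨h1, h2⟩, rfl, rfl⟩
    · exact Or.inr ⟨c, ⟨h1, h2⟩, rfl, rfl⟩

lemma mem_Dset {n g1 g2 d1 d2 : ℕ} (hn : 2 ≤ n) {b : ℕ × ℕ} :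
    b ∈ Dset n g1 g2 d1 d2 ↔
      ((b.1 = 1 ∧ g1 < b.2 ∧ b.2 ≤ d1 ∧ n - 1 ≤ b.2) ∨
       (b.1 = 2 ∧ g2 < b.2 ∧ b.2 ≤ d2 ∧ n - 1 ≤ b.2)) := by
  rw [Dset, Finset.mem_filter, Finset.mem_sdiff, mem_bx, mem_bx]
  omega

lemma chainComp {D : Finset (ℕ × ℕ)} {r c : ℕ} (t : ℕ)
    (h : ∀ k, c ≤ k → k ≤ c + t → (r, k) ∈ D) : sameComp D (r, c) (r, c + t) := by
  induction t with
  | zero => exact Relation.ReflTransGen.refl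
  | succ t ih =>
    refine Relation.ReflTransGen.tail (ih fun k hk1 hk2 => h k hk1 (by omega))
      ⟨h (c + t) (by omega) (by omega), h (c + t + 1) (by omega) (by omega), ?_⟩
    refine ⟨?_, ?_, ?_, ?_⟩ <;> simp <;> omega

set_option maxHeartbeats 1000000 in
/-- Let `γ, δ` be `(n-2)`-strict partitions in a `2 × (2n-2)`
rectangle with `|δ| = |γ| + p` and `γ → δ` (Pieri relation for `LG(2,2n)`).
Some connected component of `D` is bisected — i.e. some killed `D`-box has
non-killed boxes of its component in both earlier and later columns — if and
only if (i) `|γ| ≤ 2n-3` and `|δ| > 2n-3`; (ii) `γ ⊆ δ`; (iii) `γ_1 < n-1`;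
and (iv) `δ_2 < γ_1`. -/
theorem stmt15 (n p : ℕ) (hn : 2 ≤ n) (hp1 : 1 ≤ p) (hp2 : p ≤ 2 * n - 2)
    (g1 g2 d1 d2 : ℕ)
    (hg : g2 ≤ g1) (hg1 : g1 ≤ 2 * n - 2) (hgs : n - 2 < g1 → g2 < g1)
    (hd : d2 ≤ d1) (hd1 : d1 ≤ 2 * n - 2) (hds : n - 2 < d1 → d2 < d1)
    (hsize : d1 + d2 = g1 + g2 + p)
    (hrel : PieriRelC n g1 g2 d1 d2) :
    (∃ b ∈ Dset n g1 g2 d1 d2, killedC n g1 g2 d2 b ∧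
      (∃ e ∈ Dset n g1 g2 d1 d2, sameComp (Dset n g1 g2 d1 d2) b e ∧
        e.2 < b.2 ∧ ¬killedC n g1 g2 d2 e) ∧
      (∃ e ∈ Dset n g1 g2 d1 d2, sameComp (Dset n g1 g2 d1 d2) b e ∧
        b.2 < e.2 ∧ ¬killedC n g1 g2 d2 e)) ↔
    ((g1 + g2 ≤ 2 * n - 3 ∧ 2 * n - 3 < d1 + d2) ∧
     (g1 ≤ d1 ∧ g2 ≤ d2) ∧ g1 < n - 1 ∧ d2 < g1) := by

  have hd2 : d2 ≤ 2 * n - 3 := by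
    rcases Nat.lt_or_ge (n - 2) d1 with h | h
    · have := hds h; omega
    · omega
  constructor
  · rintro ⟨b, hb, hkb, ⟨e, he, _, helt, hke⟩, ⟨e', he', _, hegt, hke'⟩⟩
    rw [mem_Dset hn] at hb he he'
    simp only [killedC] at hkb hke hke'
    omega
  · rintro ⟨⟨hgg, hdd⟩, ⟨hgd1, hgd2⟩, hg1n, hd2g1⟩
    have hn3 : 3 ≤ n := by omega
    refine ⟨(1, 2 * n - 2 - g1), ?_, ?_,
      ⟨(1, 2 * n - 3 - g1), ?_, ?_, ?_, ?_⟩,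
      ⟨(1, 2 * n - 2 - d2), ?_, ?_, ?_, ?_⟩⟩
    · rw [mem_Dset hn]; left; refine ⟨rfl, ?_, ?_, ?_⟩ <;> simp <;> omega
    · simp only [killedC]; simp; omega
    · rw [mem_Dset hn]; left; refine ⟨rfl, ?_, ?_, ?_⟩ <;> simp <;> omega
    · exact Relation.ReflTransGen.single
        ⟨by rw [mem_Dset hn]; left; refine ⟨rfl, ?_, ?_, ?_⟩ <;> simp <;> omega,
         by rw [mem_Dset hn]; left; refine ⟨rfl, ?_, ?_, ?_⟩ <;> simp <;> omega,
         by refine ⟨?_, ?_, ?_, ?_⟩ <;> simp <;> omega⟩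
    · simp; omega
    · simp only [killedC]; simp; omega
    · rw [mem_Dset hn]; left; refine ⟨rfl, ?_, ?_, ?_⟩ <;> simp <;> omega
    · have heq : 2 * n - 2 - d2 = (2 * n - 2 - g1) + (g1 - d2) := by omega
      rw [heq]
      exact chainComp (g1 - d2) fun k hk1 hk2 => by
        rw [mem_Dset hn]; left; refine ⟨rfl, ?_, ?_, ?_⟩ <;> simp <;> omega
    · simp; omega
    · simp only [killedC]; simp; omega
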